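/- For every γ = (γ₁,γ₂,γ₃,0) ∈ ℤ⁴ with last coordinate zero, there exist constants X₁, X₂ ∈ ℂ and parameter vectors γ¹, γ² ∈ ℤ⁴ such that z₁·F_γ = X₁·F_{γ¹} + X₂·(z₁z₄ − z₂z₃)·F_{γ²} as polynomials in ℂ[z₁,z₂,z₃,z₄]. -/
import Mathlib

open MvPolynomial Finset

/-- The hypergeometric Γ-series `F_γ` for the lattice `B = ℤ⟨(1,-1,-1,1)⟩`,
as a polynomial in `ℂ[z₁,z₂,z₃,z₄]`. -/
noncomputable def GammaSeries (γ : Fin 4 → ℤ) : MvPolynomial (Fin 4) ℂ :=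
  ∑ n ∈ Finset.Icc (max (-γ 0) (-γ 3)) (min (γ 1) (γ 2)),
    MvPolynomial.C ((((γ 0 + n).toNat.factorial * (γ 1 - n).toNat.factorial *
        (γ 2 - n).toNat.factorial * (γ 3 + n).toNat.factorial : ℕ) : ℂ))⁻¹ *
      (X 0 ^ (γ 0 + n).toNat * X 1 ^ (γ 1 - n).toNat *
        X 2 ^ (γ 2 - n).toNat * X 3 ^ (γ 3 + n).toNat)

namespace GammaAux

/-- The common monomial indexed by `m`. -/
noncomputable def Mon (a b c m : ℤ) : MvPolynomial (Fin 4) ℂ :=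
  X 0 ^ (a + 1 + m).toNat * X 1 ^ (b - m).toNat * X 2 ^ (c - m).toNat * X 3 ^ m.toNat

/-- The common denominator indexed by `m`. -/
noncomputable def Den (a b c m : ℤ) : ℂ :=
  (((a + 1 + m).toNat.factorial * (b - m).toNat.factorial *
      (c - m).toNat.factorial * m.toNat.factorial : ℕ) : ℂ)

noncomputable def Vl (a b c m : ℤ) : MvPolynomial (Fin 4) ℂ :=
  C (((a + 1 + m : ℤ) : ℂ) * (Den a b c m)⁻¹) * Mon a b c m

noncomputable def Vq (a b c m : ℤ) : MvPolynomial (Fin 4) ℂ :=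
  C (((a + 1 + m : ℤ) : ℂ) * ((m : ℤ) : ℂ) * (Den a b c m)⁻¹) * Mon a b c m

noncomputable def Vr (a b c m : ℤ) : MvPolynomial (Fin 4) ℂ :=
  C (((b - m : ℤ) : ℂ) * ((c - m : ℤ) : ℂ) * (Den a b c m)⁻¹) * Mon a b c m

lemma cast_toNat (k : ℤ) (h : 0 ≤ k) : ((k.toNat : ℂ)) = (k : ℂ) := by
  rw [← Int.cast_natCast, Int.toNat_of_nonneg h]

lemma mul_inv_helper {A d e : ℂ} (hA : A ≠ 0) (h : e = A * d) : A * e⁻¹ = d⁻¹ := by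
  subst h; rw [mul_inv, ← mul_assoc, mul_inv_cancel₀ hA, one_mul]

lemma term_L (a b c m : ℤ) (h0 : 0 ≤ a + m) :
    X 0 * (C ((((a + m).toNat.factorial * (b - m).toNat.factorial *
        (c - m).toNat.factorial * m.toNat.factorial : ℕ) : ℂ))⁻¹ *
      (X 0 ^ (a + m).toNat * X 1 ^ (b - m).toNat *
        X 2 ^ (c - m).toNat * X 3 ^ m.toNat))
    = Vl a b c m := by
  have ht : (a + 1 + m).toNat = (a + m).toNat + 1 := by omega
  have hA : ((a + 1 + m : ℤ) : ℂ) ≠ 0 := Int.cast_ne_zero.mpr (by omega)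
  have key : Den a b c m = ((a + 1 + m : ℤ) : ℂ) *
      ((((a + m).toNat.factorial * (b - m).toNat.factorial *
        (c - m).toNat.factorial * m.toNat.factorial : ℕ) : ℂ)) := by
    rw [Den, ht, Nat.factorial_succ]
    push_cast [cast_toNat _ h0]
    ring
  rw [Vl, mul_inv_helper hA key, Mon, ht]
  ring

lemma term_Q (a b c n : ℤ) (h0 : 0 ≤ a + 1 + n) (hn : 0 ≤ n) :
    (X 0 * X 3) * (C ((((a + 1 + n).toNat.factorial * (b - 1 - n).toNat.factorial *
        (c - 1 - n).toNat.factorial * n.toNat.factorial : ℕ) : ℂ))⁻¹ *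
      (X 0 ^ (a + 1 + n).toNat * X 1 ^ (b - 1 - n).toNat *
        X 2 ^ (c - 1 - n).toNat * X 3 ^ n.toNat))
    = Vq a b c (n + 1) := by
  have ht1 : (a + 1 + (n + 1)).toNat = (a + 1 + n).toNat + 1 := by omega
  have ht2 : (b - (n + 1)).toNat = (b - 1 - n).toNat := by omega
  have ht3 : (c - (n + 1)).toNat = (c - 1 - n).toNat := by omega
  have ht4 : (n + 1).toNat = n.toNat + 1 := by omega
  have hA : ((a + 1 + (n + 1) : ℤ) : ℂ) * ((n + 1 : ℤ) : ℂ) ≠ 0 :=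
    mul_ne_zero (Int.cast_ne_zero.mpr (by omega)) (Int.cast_ne_zero.mpr (by omega))
  have key : Den a b c (n + 1) = (((a + 1 + (n + 1) : ℤ) : ℂ) * ((n + 1 : ℤ) : ℂ)) *
      ((((a + 1 + n).toNat.factorial * (b - 1 - n).toNat.factorial *
        (c - 1 - n).toNat.factorial * n.toNat.factorial : ℕ) : ℂ)) := by
    rw [Den, ht1, ht2, ht3, ht4, Nat.factorial_succ, Nat.factorial_succ]
    push_cast [cast_toNat _ h0, cast_toNat _ hn]
    ring
  rw [Vq, mul_inv_helper hA key, Mon, ht1, ht2, ht3, ht4]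
  ring

lemma term_R (a b c n : ℤ) (hb : n ≤ b - 1) (hc : n ≤ c - 1) :
    (X 1 * X 2) * (C ((((a + 1 + n).toNat.factorial * (b - 1 - n).toNat.factorial *
        (c - 1 - n).toNat.factorial * n.toNat.factorial : ℕ) : ℂ))⁻¹ *
      (X 0 ^ (a + 1 + n).toNat * X 1 ^ (b - 1 - n).toNat *
        X 2 ^ (c - 1 - n).toNat * X 3 ^ n.toNat))
    = Vr a b c n := by
  have ht2 : (b - n).toNat = (b - 1 - n).toNat + 1 := by omega
  have ht3 : (c - n).toNat = (c - 1 - n).toNat + 1 := by omega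
  have hA : ((b - n : ℤ) : ℂ) * ((c - n : ℤ) : ℂ) ≠ 0 :=
    mul_ne_zero (Int.cast_ne_zero.mpr (by omega)) (Int.cast_ne_zero.mpr (by omega))
  have key : Den a b c n = (((b - n : ℤ) : ℂ) * ((c - n : ℤ) : ℂ)) *
      ((((a + 1 + n).toNat.factorial * (b - 1 - n).toNat.factorial *
        (c - 1 - n).toNat.factorial * n.toNat.factorial : ℕ) : ℂ)) := by
    rw [Den, ht2, ht3, Nat.factorial_succ, Nat.factorial_succ]
    push_cast [cast_toNat _ (by omega : (0:ℤ) ≤ b - 1 - n), cast_toNat _ (by omega : (0:ℤ) ≤ c - 1 - n)]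
    ring
  rw [Vr, mul_inv_helper hA key, Mon, ht2, ht3]
  ring

lemma Vl_boundary (a b c m : ℤ) (h : a + 1 + m = 0) : Vl a b c m = 0 := by
  rw [Vl, h]; simp

lemma Vq_boundary (a b c m : ℤ) (h : a + 1 + m = 0 ∨ m = 0) : Vq a b c m = 0 := by
  rcases h with h | h <;> rw [Vq, h] <;> simp

lemma Vr_boundary (a b c m : ℤ) (h : b - m = 0 ∨ c - m = 0) : Vr a b c m = 0 := by
  rcases h with h | h <;> rw [Vr, h] <;> simp

lemma sum_L (a b c : ℤ) :
    X 0 * (∑ n ∈ Icc (max (-a) 0) (min b c),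
      C ((((a + n).toNat.factorial * (b - n).toNat.factorial *
        (c - n).toNat.factorial * n.toNat.factorial : ℕ) : ℂ))⁻¹ *
      (X 0 ^ (a + n).toNat * X 1 ^ (b - n).toNat *
        X 2 ^ (c - n).toNat * X 3 ^ n.toNat))
    = ∑ m ∈ Icc (max (-(a + 1)) 0) (min b c), Vl a b c m := by
  rw [Finset.mul_sum]
  have h1 : ∑ m ∈ Icc (max (-a) 0) (min b c), X 0 *
      (C ((((a + m).toNat.factorial * (b - m).toNat.factorial *
        (c - m).toNat.factorial * m.toNat.factorial : ℕ) : ℂ))⁻¹ *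
      (X 0 ^ (a + m).toNat * X 1 ^ (b - m).toNat *
        X 2 ^ (c - m).toNat * X 3 ^ m.toNat))
      = ∑ m ∈ Icc (max (-a) 0) (min b c), Vl a b c m := by
    refine Finset.sum_congr rfl (fun m hm => ?_)
    rw [Finset.mem_Icc] at hm
    exact term_L a b c m (by omega)
  rw [h1]
  apply Finset.sum_subset (Finset.Icc_subset_Icc (by omega) le_rfl)
  intro m hm hnot
  rw [Finset.mem_Icc] at hm hnot
  exact Vl_boundary a b c m (by omega)

lemma sum_Q (a b c : ℤ) :
    (X 0 * X 3) * (∑ n ∈ Icc (max (-(a + 1)) 0) (min (b - 1) (c - 1)),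
      C ((((a + 1 + n).toNat.factorial * (b - 1 - n).toNat.factorial *
        (c - 1 - n).toNat.factorial * n.toNat.factorial : ℕ) : ℂ))⁻¹ *
      (X 0 ^ (a + 1 + n).toNat * X 1 ^ (b - 1 - n).toNat *
        X 2 ^ (c - 1 - n).toNat * X 3 ^ n.toNat))
    = ∑ m ∈ Icc (max (-(a + 1)) 0) (min b c), Vq a b c m := by
  rw [Finset.mul_sum]
  have h1 : ∑ n ∈ Icc (max (-(a + 1)) 0) (min (b - 1) (c - 1)), (X 0 * X 3) *
      (C ((((a + 1 + n).toNat.factorial * (b - 1 - n).toNat.factorial *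
        (c - 1 - n).toNat.factorial * n.toNat.factorial : ℕ) : ℂ))⁻¹ *
      (X 0 ^ (a + 1 + n).toNat * X 1 ^ (b - 1 - n).toNat *
        X 2 ^ (c - 1 - n).toNat * X 3 ^ n.toNat))
      = ∑ n ∈ Icc (max (-(a + 1)) 0) (min (b - 1) (c - 1)), Vq a b c (n + 1) := by
    refine Finset.sum_congr rfl (fun n hn => ?_)
    rw [Finset.mem_Icc] at hn
    exact term_Q a b c n (by omega) (by omega)
  rw [h1]
  have hmap : Icc (max (-(a + 1)) 0 + 1) (min (b - 1) (c - 1) + 1)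
      = (Icc (max (-(a + 1)) 0) (min (b - 1) (c - 1))).map (addRightEmbedding 1) := by
    rw [Finset.map_add_right_Icc]
  have : ∑ n ∈ Icc (max (-(a + 1)) 0) (min (b - 1) (c - 1)), Vq a b c (n + 1)
      = ∑ m ∈ Icc (max (-(a + 1)) 0 + 1) (min (b - 1) (c - 1) + 1), Vq a b c m := by
    rw [hmap, Finset.sum_map]
    simp [addRightEmbedding_apply]
  rw [this]
  apply Finset.sum_subset (Finset.Icc_subset_Icc (by omega) (by omega))
  intro m hm hnot
  rw [Finset.mem_Icc] at hm hnot
  exact Vq_boundary a b c m (by omega)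

lemma sum_R (a b c : ℤ) :
    (X 1 * X 2) * (∑ n ∈ Icc (max (-(a + 1)) 0) (min (b - 1) (c - 1)),
      C ((((a + 1 + n).toNat.factorial * (b - 1 - n).toNat.factorial *
        (c - 1 - n).toNat.factorial * n.toNat.factorial : ℕ) : ℂ))⁻¹ *
      (X 0 ^ (a + 1 + n).toNat * X 1 ^ (b - 1 - n).toNat *
        X 2 ^ (c - 1 - n).toNat * X 3 ^ n.toNat))
    = ∑ m ∈ Icc (max (-(a + 1)) 0) (min b c), Vr a b c m := by
  rw [Finset.mul_sum]
  have h1 : ∑ n ∈ Icc (max (-(a + 1)) 0) (min (b - 1) (c - 1)), (X 1 * X 2) *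
      (C ((((a + 1 + n).toNat.factorial * (b - 1 - n).toNat.factorial *
        (c - 1 - n).toNat.factorial * n.toNat.factorial : ℕ) : ℂ))⁻¹ *
      (X 0 ^ (a + 1 + n).toNat * X 1 ^ (b - 1 - n).toNat *
        X 2 ^ (c - 1 - n).toNat * X 3 ^ n.toNat))
      = ∑ n ∈ Icc (max (-(a + 1)) 0) (min (b - 1) (c - 1)), Vr a b c n := by
    refine Finset.sum_congr rfl (fun n hn => ?_)
    rw [Finset.mem_Icc] at hn
    exact term_R a b c n (by omega) (by omega)
  rw [h1]
  apply Finset.sum_subset (Finset.Icc_subset_Icc le_rfl (by omega))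
  intro m hm hnot
  rw [Finset.mem_Icc] at hm hnot
  exact Vr_boundary a b c m (by omega)

end GammaAux

open GammaAux in
/-- Multiplication of `F_γ` by `X 0` is a combination
`X₁ F_{γ¹} + X₂ (z₁z₄ − z₂z₃) F_{γ²}`. -/
theorem gammaSeries_mul_var (γ : Fin 4 → ℤ) (hγ : γ 3 = 0) :
    ∃ (X₁ X₂ : ℂ) (δ₁ δ₂ : Fin 4 → ℤ),
      (X 0) * GammaSeries γ =
        C X₁ * GammaSeries δ₁ +
          C X₂ * ((X 0 * X 3 - X 1 * X 2) * GammaSeries δ₂) := by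
  set a := γ 0 with ha
  set b := γ 1 with hb
  set c := γ 2 with hc
  by_cases hs : a + b + c = -1
  · -- degenerate case: the series is zero
    refine ⟨0, 0, γ, γ, ?_⟩
    have hempty : GammaSeries γ = 0 := by
      rw [GammaSeries]
      have he : Finset.Icc (max (-γ 0) (-γ 3)) (min (γ 1) (γ 2)) = ∅ :=
        Finset.Icc_eq_empty (by omega)
      rw [he, Finset.sum_empty]
    rw [hempty]
    simp
  · have hs1 : ((a : ℂ) + b + c + 1) ≠ 0 := by
      have h1 : ((a + b + c + 1 : ℤ) : ℂ) ≠ 0 := Int.cast_ne_zero.mpr (by omega)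
      push_cast at h1
      exact h1
    refine ⟨((a : ℂ) + 1) + (b : ℂ) * (c : ℂ) * ((a : ℂ) + b + c + 1)⁻¹,
      ((a : ℂ) + b + c + 1)⁻¹, ![a + 1, b, c, 0], ![a + 1, b - 1, c - 1, 0], ?_⟩
    have hG : GammaSeries γ = ∑ n ∈ Icc (max (-a) 0) (min b c),
        C ((((a + n).toNat.factorial * (b - n).toNat.factorial *
          (c - n).toNat.factorial * n.toNat.factorial : ℕ) : ℂ))⁻¹ *
        (X 0 ^ (a + n).toNat * X 1 ^ (b - n).toNat *
          X 2 ^ (c - n).toNat * X 3 ^ n.toNat) := by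
      rw [GammaSeries]
      simp only [hγ, ← ha, ← hb, ← hc, neg_zero, zero_add]
    have hG1 : GammaSeries ![a + 1, b, c, 0] = ∑ m ∈ Icc (max (-(a + 1)) 0) (min b c),
        C (Den a b c m)⁻¹ * Mon a b c m := by
      rw [GammaSeries]
      simp only [Matrix.cons_val_zero, Matrix.cons_val_one, Matrix.head_cons,
        Matrix.cons_val_two, Matrix.tail_cons, Matrix.cons_val_three,
        neg_zero, zero_add, Den, Mon]
    have hG2 : GammaSeries ![a + 1, b - 1, c - 1, 0]
        = ∑ n ∈ Icc (max (-(a + 1)) 0) (min (b - 1) (c - 1)),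
        C ((((a + 1 + n).toNat.factorial * (b - 1 - n).toNat.factorial *
          (c - 1 - n).toNat.factorial * n.toNat.factorial : ℕ) : ℂ))⁻¹ *
        (X 0 ^ (a + 1 + n).toNat * X 1 ^ (b - 1 - n).toNat *
          X 2 ^ (c - 1 - n).toNat * X 3 ^ n.toNat) := by
      rw [GammaSeries]
      simp only [Matrix.cons_val_zero, Matrix.cons_val_one, Matrix.head_cons,
        Matrix.cons_val_two, Matrix.tail_cons, Matrix.cons_val_three,
        neg_zero, zero_add]
    rw [hG, hG1, hG2, sum_L, sub_mul, sum_Q, sum_R, ← Finset.sum_sub_distrib,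
      Finset.mul_sum, Finset.mul_sum, ← Finset.sum_add_distrib]
    apply Finset.sum_congr rfl
    intro m _
    have hcoef : ((a + 1 + m : ℤ) : ℂ)
        = (((a : ℂ) + 1) + (b : ℂ) * (c : ℂ) * ((a : ℂ) + b + c + 1)⁻¹)
          + ((a : ℂ) + b + c + 1)⁻¹ *
            (((a + 1 + m : ℤ) : ℂ) * ((m : ℤ) : ℂ) - ((b - m : ℤ) : ℂ) * ((c - m : ℤ) : ℂ)) := by
      push_cast
      field_simp
      ring
    have h : ((a + 1 + m : ℤ) : ℂ) * (Den a b c m)⁻¹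
        = (((a : ℂ) + 1) + (b : ℂ) * (c : ℂ) * ((a : ℂ) + b + c + 1)⁻¹) * (Den a b c m)⁻¹
          + ((a : ℂ) + b + c + 1)⁻¹ *
            (((a + 1 + m : ℤ) : ℂ) * ((m : ℤ) : ℂ) * (Den a b c m)⁻¹
              - ((b - m : ℤ) : ℂ) * ((c - m : ℤ) : ℂ) * (Den a b c m)⁻¹) := by
      linear_combination (Den a b c m)⁻¹ * hcoef
    rw [Vl, Vq, Vr, h]
    simp only [map_add, map_mul, map_sub, map_one]
    ring
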